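/- arXiv:2407.00746 — 5 statements merged into one kernel-verified Lean document; each statement's English description precedes it below -/
import Mathlib

section
/- Let A ∈ ℝ^{m×n}, b ∈ ℝ^m, W ∈ ℝ^{n×n} symmetric positive definite, and S ∈ ℝ^{m×k} such that Aᵀ S has full column rank k. Then the matrix Sᵀ A W Aᵀ S is invertible, and p = W Aᵀ S (Sᵀ A W Aᵀ S)⁻¹ Sᵀ r satisfies the sketched equation Sᵀ A p = Sᵀ r for any r ∈ ℝ^m. -/
/-! With `C = SᵀA`, full column rank of `Cᵀ = AᵀS` makes `Cᵀ` injective, so the Gram matrix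
`C W Cᵀ = SᵀAWAᵀS` is positive definite, hence invertible; then `W Cᵀ (C W Cᵀ)⁻¹` is a right
inverse of `C`, which gives `SᵀA p = Sᵀ r`. -/

open Matrix

variable {m n k : Type*} [Fintype n]

theorem Matrix.mulVec_injective_of_rank_eq_card {K : Type*} [Field K] {M : Matrix m n K}
    (hM : M.rank = Fintype.card n) : Function.Injective M.mulVec := by
  rw [mulVec_injective_iff, linearIndependent_iff_card_eq_finrank_span, ← hM,
    rank_eq_finrank_span_cols]
  rfl

theorem Matrix.PosDef.mul_mul_transpose_of_rank_eq_card [Fintype k] {W : Matrix n n ℝ}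
    (hW : W.PosDef) {C : Matrix k n ℝ} (hC : Cᵀ.rank = Fintype.card k) : (C * W * Cᵀ).PosDef := by
  simpa [conjTranspose_eq_transpose_of_trivial] using
    hW.conjTranspose_mul_mul_same (mulVec_injective_of_rank_eq_card hC)

theorem Matrix.mul_mul_transpose_mul_nonsing_inv [Fintype k] [DecidableEq k] {R : Type*}
    [CommRing R] (C : Matrix k n R) (W : Matrix n n R) (h : IsUnit (C * W * Cᵀ).det) :
    C * (W * Cᵀ * (C * W * Cᵀ)⁻¹) = 1 := by
  rw [← Matrix.mul_assoc, ← Matrix.mul_assoc, mul_nonsing_inv _ h]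

theorem sketched_equation_general (m n k : ℕ) (A : Matrix (Fin m) (Fin n) ℝ)
    (W : Matrix (Fin n) (Fin n) ℝ) (hW : W.PosDef)
    (S : Matrix (Fin m) (Fin k) ℝ) (hrank : (Aᵀ * S).rank = k) :
    IsUnit (Sᵀ * A * W * Aᵀ * S).det ∧
    ∀ r : Fin m → ℝ,
      (Sᵀ * A).mulVec ((W * Aᵀ * S * (Sᵀ * A * W * Aᵀ * S)⁻¹ * Sᵀ).mulVec r)
        = Sᵀ.mulVec r := by
  have hgram : Sᵀ * A * W * Aᵀ * S = (Sᵀ * A) * W * (Sᵀ * A)ᵀ := by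
    simp only [transpose_mul, transpose_transpose, Matrix.mul_assoc]
  have hunit : IsUnit (Sᵀ * A * W * Aᵀ * S).det := by
    rw [hgram]
    refine (hW.mul_mul_transpose_of_rank_eq_card ?_).det_pos.ne'.isUnit
    rwa [transpose_mul, transpose_transpose, Fintype.card_fin]
  refine ⟨hunit, fun r => ?_⟩
  have hright := mul_mul_transpose_mul_nonsing_inv (Sᵀ * A) W (hgram ▸ hunit)
  calc (Sᵀ * A) *ᵥ ((W * Aᵀ * S * (Sᵀ * A * W * Aᵀ * S)⁻¹ * Sᵀ) *ᵥ r)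
      = ((Sᵀ * A) * (W * (Sᵀ * A)ᵀ * ((Sᵀ * A) * W * (Sᵀ * A)ᵀ)⁻¹) * Sᵀ) *ᵥ r := by
        simp only [mulVec_mulVec, transpose_mul, transpose_transpose, Matrix.mul_assoc]
    _ = Sᵀ *ᵥ r := by rw [hright, Matrix.one_mul]

/-- If `AᵀS` has full column rank and `W` is spd, then `SᵀAWAᵀS` is invertible and
the sketch-and-project update satisfies the sketched equation. -/
theorem sketched_equation (m n k : ℕ) (A : Matrix (Fin m) (Fin n) ℝ)
    (W : Matrix (Fin n) (Fin n) ℝ) (hW : W.PosDef)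
    (S : Matrix (Fin m) (Fin k) ℝ) (hrank : (Aᵀ * S).rank = k)
    (b : Fin m → ℝ) :
    IsUnit (Sᵀ * A * W * Aᵀ * S).det ∧
    ∀ r : Fin m → ℝ,
      (Sᵀ * A).mulVec ((W * Aᵀ * S * (Sᵀ * A * W * Aᵀ * S)⁻¹ * Sᵀ).mulVec r)
        = Sᵀ.mulVec r :=
  sketched_equation_general m n k A W hW S hrank
end

section
/- Let W ∈ ℝ^{n×n} be symmetric positive definite, A ∈ ℝ^{m×n}, and for each k let S_k ∈ ℝ^{m×k} be nested sketches (S_{k−1} equals the first k−1 columns of S_k). Suppose for each i ≤ k the update is p_i = W Aᵀ S_i (S_iᵀ A W Aᵀ S_i)⁻¹ S_iᵀ r_{i−1} (with the inner matrix invertible), and suppose S_kᵀ r_{i−1} = δ_i e_i for scalars δ_i (e_i the i-th standard basis vector in ℝ^k). Then the updates are W⁻¹-orthogonal: p_iᵀ W⁻¹ p_j = 0 for all 1 ≤ i < j ≤ k. -/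
/-!
With `G = A W Aᵀ`, the `W⁻¹`-inner product of `W Aᵀ u` and `W Aᵀ v` is `uᵀ G v`. Since
`S_i = S_j F` for `i < j`, the factor `S_iᵀ G S_j (S_jᵀ G S_j)⁻¹ S_jᵀ` collapses to `S_iᵀ`, so
`p_iᵀ W⁻¹ p_j = zᵀ S_iᵀ r_{j-1}` for some `z`, and `S_iᵀ r_{j-1} = δ_j E_iᵀ e_j` vanishes
because `j > i`.
-/

open Matrix

namespace Matrix

section Sketch

variable {R : Type*} [CommRing R] {m a b : Type*} [Fintype m] [Fintype b] [DecidableEq b]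

theorem dotProduct_mulVec_mulVec_eq {c : Type*} [Fintype a] [Fintype c] (P : Matrix m a R)
    (Q : Matrix m c R) (x : a → R) (y : c → R) : P *ᵥ x ⬝ᵥ Q *ᵥ y = x ⬝ᵥ (Pᵀ * Q) *ᵥ y := by
  rw [dotProduct_mulVec, ← vecMul_transpose, vecMul_vecMul, ← dotProduct_mulVec]

/-- If the columns of `U * F` lie in those of `U`, the `G`-oblique projector
`U (Uᵀ G U)⁻¹ Uᵀ G` onto the columns of `U` fixes them. -/
theorem transpose_mul_mul_sketch_inv_eq (G : Matrix m m R) (U : Matrix m b R)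
    (F : Matrix b a R) (hU : IsUnit (Uᵀ * G * U).det) :
    (U * F)ᵀ * G * U * (Uᵀ * G * U)⁻¹ * Uᵀ = (U * F)ᵀ := by
  calc (U * F)ᵀ * G * U * (Uᵀ * G * U)⁻¹ * Uᵀ
      = Fᵀ * ((Uᵀ * G * U) * (Uᵀ * G * U)⁻¹) * Uᵀ := by
        simp only [transpose_mul, Matrix.mul_assoc]
    _ = (U * F)ᵀ := by rw [mul_nonsing_inv _ hU, Matrix.mul_one, transpose_mul]

theorem sketch_update_dotProduct_inv_mulVec_eq_zero [Fintype a] {n : Type*} [Fintype n]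
    [DecidableEq n] {W : Matrix n n R} (hWsymm : Wᵀ = W) (hW : IsUnit W.det) (A : Matrix m n R)
    {T : Matrix m a R} {U : Matrix m b R} {F : Matrix b a R} (hTU : T = U * F)
    (hU : IsUnit (Uᵀ * A * W * Aᵀ * U).det) (X : Matrix a a R) (x : m → R) {y : m → R}
    (hy : Tᵀ *ᵥ y = 0) :
    (W * Aᵀ * T * X * Tᵀ) *ᵥ x ⬝ᵥ
      W⁻¹ *ᵥ ((W * Aᵀ * U * (Uᵀ * A * W * Aᵀ * U)⁻¹ * Uᵀ) *ᵥ y) = 0 := by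
  have hproj : Tᵀ * (A * W * Aᵀ) * U * (Uᵀ * (A * W * Aᵀ) * U)⁻¹ * Uᵀ = Tᵀ := by
    rw [hTU]
    exact transpose_mul_mul_sketch_inv_eq _ U F (by simpa only [Matrix.mul_assoc] using hU)
  have hmat : (W * Aᵀ * T * X * Tᵀ)ᵀ * (W⁻¹ * (W * Aᵀ * U * (Uᵀ * A * W * Aᵀ * U)⁻¹ * Uᵀ))
      = T * Xᵀ * Tᵀ := by
    calc _ = T * Xᵀ * (Tᵀ * (A * W * Aᵀ) * U * (Uᵀ * (A * W * Aᵀ) * U)⁻¹ * Uᵀ) := by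
          simp only [transpose_mul, transpose_transpose, hWsymm, Matrix.mul_assoc,
            nonsing_inv_mul_cancel_left _ _ hW]
      _ = T * Xᵀ * Tᵀ := by rw [hproj]
  rw [mulVec_mulVec, dotProduct_mulVec_mulVec_eq, hmat, ← mulVec_mulVec, hy, mulVec_zero,
    dotProduct_zero]

end Sketch

/-- The paper's `E_b = [e₁, …, e_b]`. -/
def firstCols (R : Type*) [Zero R] [One R] (a b : ℕ) : Matrix (Fin a) (Fin b) R :=
  of fun x y => if (x : ℕ) = y then 1 else 0

variable {R : Type*} [CommRing R]

theorem firstCols_mul_firstCols {a b c : ℕ} (h : b ≤ c) :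
    firstCols R a c * firstCols R c b = firstCols R a b := by
  ext x y
  simp only [firstCols, mul_apply, of_apply, mul_ite, mul_one, mul_zero]
  by_cases hxy : (x : ℕ) = y
  · rw [Finset.sum_eq_single ⟨y, by omega⟩] <;> simp +contextual [hxy, Fin.ext_iff]
  · rw [if_neg hxy]
    exact Finset.sum_eq_zero fun z _ => by split_ifs <;> first | rfl | omega

theorem firstCols_transpose_mulVec_single {a b : ℕ} {j : Fin a} (h : b ≤ j) (r : R) :
    (firstCols R a b)ᵀ *ᵥ Pi.single j r = 0 := by
  ext y
  simp [mulVec_single, firstCols, show (j : ℕ) ≠ y by omega]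

end Matrix

/-- Nested-sketch updates with sketched residuals along basis directions are
`W⁻¹`-orthogonal. -/
theorem updates_W_orthogonal (m n k : ℕ)
    (W : Matrix (Fin n) (Fin n) ℝ) (hW : W.PosDef)
    (A : Matrix (Fin m) (Fin n) ℝ)
    (S : Matrix (Fin m) (Fin k) ℝ)
    -- E i selects the first i+1 columns (columns e_1, …, e_{i+1})
    (E : (i : Fin k) → Matrix (Fin k) (Fin (i + 1)) ℝ)
    (hE : ∀ (i : Fin k) (a : Fin k) (b : Fin (i + 1)), E i a b = if (a : ℕ) = (b : ℕ) then 1 else 0)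
    -- r i denotes r_{i-1}, the residual used to produce update p_i
    (r : Fin k → Fin m → ℝ) (δ : Fin k → ℝ) (p : Fin k → Fin n → ℝ)
    (hinv : ∀ i : Fin k,
      IsUnit ((S * E i)ᵀ * A * W * Aᵀ * (S * E i)).det)
    (hp : ∀ i : Fin k,
      p i = (W * Aᵀ * (S * E i) *
        ((S * E i)ᵀ * A * W * Aᵀ * (S * E i))⁻¹ * (S * E i)ᵀ).mulVec (r i))
    (hres : ∀ i : Fin k, Sᵀ.mulVec (r i) = δ i • (Pi.single i 1 : Fin k → ℝ)) :
    ∀ i j : Fin k, i < j → p i ⬝ᵥ W⁻¹.mulVec (p j) = 0 := by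
  intro i j hij
  have hEcols (l : Fin k) : E l = firstCols ℝ k (l + 1) := ext (hE l)
  have hWsymm : Wᵀ = W := by simpa using hW.isHermitian.eq
  have hnested : S * E i = S * E j * firstCols ℝ (j + 1) (i + 1) := by
    rw [hEcols, hEcols, Matrix.mul_assoc, firstCols_mul_firstCols (by omega)]
  have hsketched : (S * E i)ᵀ *ᵥ r j = 0 := by
    rw [transpose_mul, ← mulVec_mulVec, hres j, mulVec_smul, hEcols,
      firstCols_transpose_mulVec_single (by omega), smul_zero]
  rw [hp i, hp j]
  exact sketch_update_dotProduct_inv_mulVec_eq_zero hWsymm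
    ((isUnit_iff_isUnit_det W).mp hW.isUnit) A hnested (hinv j) _ _ hsketched
end

section
/- Let A ∈ ℝⁿˣⁿ be invertible and b ∈ ℝⁿ. With weight B = Aᵀ A (so W = B⁻¹ = A⁻¹ A⁻ᵀ) and sketch S with invertible Sᵀ S and ASᵀ structure as in PLSS with residual sketches, the update p = W Aᵀ S (Sᵀ A W Aᵀ S)⁻¹ Sᵀ r simplifies to p = A⁻¹ S (Sᵀ S)⁻¹ Sᵀ r. In particular, if r ∈ Range(S) then p = A⁻¹ r, so starting from x₀ with r₀ = b − A x₀ the first iterate x₁ = x₀ + p₁ = A⁻¹ b. -/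
open Matrix

/-- With weight `B = AᵀA` (so `W = A⁻¹A⁻ᵀ`), the sketch-and-project update
simplifies to `p = A⁻¹ S (SᵀS)⁻¹ Sᵀ r`; if `r ∈ Range S` then `p = A⁻¹ r`,
and the first iterate is `x₁ = A⁻¹ b`. -/
theorem weight_AtA_update (n k : ℕ) (A : Matrix (Fin n) (Fin n) ℝ)
    (hA : IsUnit A.det) (b : Fin n → ℝ)
    (S : Matrix (Fin n) (Fin k) ℝ) (hSS : IsUnit (Sᵀ * S).det)
    (W : Matrix (Fin n) (Fin n) ℝ) (hW : W = (Aᵀ * A)⁻¹) :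
    (∀ r : Fin n → ℝ,
      (W * Aᵀ * S * (Sᵀ * A * W * Aᵀ * S)⁻¹ * Sᵀ).mulVec r
        = (A⁻¹ * S * (Sᵀ * S)⁻¹ * Sᵀ).mulVec r) ∧
    (∀ r : Fin n → ℝ, (∃ c : Fin k → ℝ, r = S.mulVec c) →
      (W * Aᵀ * S * (Sᵀ * A * W * Aᵀ * S)⁻¹ * Sᵀ).mulVec r = A⁻¹.mulVec r) ∧
    (∀ x₀ : Fin n → ℝ,
      (∃ c : Fin k → ℝ, b - A.mulVec x₀ = S.mulVec c) →
      x₀ + (W * Aᵀ * S * (Sᵀ * A * W * Aᵀ * S)⁻¹ * Sᵀ).mulVec (b - A.mulVec x₀)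
        = A⁻¹.mulVec b) := by
  have hAT : IsUnit Aᵀ.det := by rwa [Matrix.det_transpose]
  have hWA : W * Aᵀ = A⁻¹ := by
    rw [hW, Matrix.mul_inv_rev, Matrix.mul_assoc, Matrix.nonsing_inv_mul _ hAT,
      Matrix.mul_one]
  have hmid : Sᵀ * A * W * Aᵀ * S = Sᵀ * S := by
    rw [Matrix.mul_assoc (Sᵀ * A), hWA, Matrix.mul_assoc, Matrix.mul_assoc,
      ← Matrix.mul_assoc A, Matrix.mul_nonsing_inv _ hA, Matrix.one_mul]
  have hP : W * Aᵀ * S * (Sᵀ * A * W * Aᵀ * S)⁻¹ * Sᵀ = A⁻¹ * S * (Sᵀ * S)⁻¹ * Sᵀ := by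
    rw [hmid, hWA]
  have h1 : ∀ r : Fin n → ℝ,
      (W * Aᵀ * S * (Sᵀ * A * W * Aᵀ * S)⁻¹ * Sᵀ).mulVec r
        = (A⁻¹ * S * (Sᵀ * S)⁻¹ * Sᵀ).mulVec r := fun r => by rw [hP]
  have h2 : ∀ r : Fin n → ℝ, (∃ c : Fin k → ℝ, r = S.mulVec c) →
      (W * Aᵀ * S * (Sᵀ * A * W * Aᵀ * S)⁻¹ * Sᵀ).mulVec r = A⁻¹.mulVec r := by
    rintro r ⟨c, rfl⟩
    have hkey : A⁻¹ * S * (Sᵀ * S)⁻¹ * Sᵀ * S = A⁻¹ * S := by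
      rw [Matrix.mul_assoc _ Sᵀ S, Matrix.mul_assoc _ (Sᵀ * S)⁻¹,
        Matrix.nonsing_inv_mul _ hSS, Matrix.mul_one]
    rw [h1, Matrix.mulVec_mulVec, hkey, ← Matrix.mulVec_mulVec]
  refine ⟨h1, h2, ?_⟩
  rintro x₀ ⟨c, hc⟩
  rw [h2 _ ⟨c, hc⟩, Matrix.mulVec_sub, Matrix.mulVec_mulVec,
    Matrix.nonsing_inv_mul _ hA, Matrix.one_mulVec]
  abel
end

section
/- Let A ∈ ℝ^{m×m} be symmetric (possibly indefinite) and invertible, b ∈ ℝ^m. If the sketch-and-project iteration x_k = x_{k−1} + p_k with p_k solving S_kᵀ A p_k = S_kᵀ r_{k−1} and S_k = [r_0, …, r_{k−1}] of full column rank runs without breakdown, then the residuals r_0, …, r_{k−1} are pairwise orthogonal, and hence the method terminates with r_k = 0 for some k ≤ m. -/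
open Matrix

/-!
Each correction `A p_j` reproduces, against every earlier residual `r_i` (`i < j`), the
inner products of `r_{j-1}`; since `r_j = r_{j-1} - A p_j`, the new residual is orthogonal to
all earlier ones. Nonzero pairwise orthogonal vectors of `ℝ^m` are linearly independent, so
at most `m` of them exist, and one of `r_0, …, r_m` must vanish.
-/

theorem Matrix.linearIndependent_of_ne_zero_of_dotProduct_eq_zero {ι n : Type*} [Fintype n]
    {v : ι → n → ℝ} (hz : ∀ i, v i ≠ 0) (ho : Pairwise fun i j => v i ⬝ᵥ v j = 0) :
    LinearIndependent ℝ v := by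
  have hE : LinearIndependent ℝ (fun i => WithLp.toLp 2 (v i) : ι → EuclideanSpace ℝ n) := by
    refine linearIndependent_of_ne_zero_of_inner_eq_zero (fun i => by simpa using hz i) ?_
    intro i j hij
    simpa [PiLp.inner_apply, dotProduct, mul_comm] using ho hij
  exact hE.map' (WithLp.linearEquiv 2 ℝ (n → ℝ)).toLinearMap (LinearEquiv.ker _)

theorem Matrix.exists_eq_zero_of_dotProduct_eq_zero_of_lt {n : Type*} [Fintype n]
    (v : ℕ → n → ℝ) (ho : ∀ i j, i < j → v i ⬝ᵥ v j = 0) :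
    ∃ k ≤ Fintype.card n, v k = 0 := by
  by_contra! hz
  have hli : LinearIndependent ℝ fun k : Fin (Fintype.card n + 1) => v k := by
    refine linearIndependent_of_ne_zero_of_dotProduct_eq_zero
      (fun k => hz k (Nat.lt_succ_iff.mp k.isLt)) fun i j hij => ?_
    rcases lt_or_gt_of_ne (Fin.val_injective.ne hij) with hlt | hgt
    · exact ho _ _ hlt
    · rw [dotProduct_comm]; exact ho _ _ hgt
  simpa using hli.fintype_card_le_finrank

section SketchAndProject

variable {n : Type*} [Fintype n] {A : Matrix n n ℝ} {b : n → ℝ} {x p r : ℕ → n → ℝ}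

theorem residual_eq_sub_mulVec (hr : ∀ j, r j = b - A *ᵥ x j)
    (hx : ∀ j, 1 ≤ j → x j = x (j - 1) + p j) {j : ℕ} (hj : 1 ≤ j) :
    r j = r (j - 1) - A *ᵥ p j := by
  rw [hr j, hr (j - 1), hx j hj, mulVec_add]
  abel

theorem residual_dotProduct_eq_zero (hr : ∀ j, r j = b - A *ᵥ x j)
    (hx : ∀ j, 1 ≤ j → x j = x (j - 1) + p j)
    (hcons : ∀ j, 1 ≤ j → ∀ i < j, r i ⬝ᵥ A *ᵥ p j = r i ⬝ᵥ r (j - 1))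
    {i j : ℕ} (hij : i < j) :
    r i ⬝ᵥ r j = 0 := by
  have hj : 1 ≤ j := by omega
  rw [residual_eq_sub_mulVec hr hx hj, dotProduct_sub, hcons j hj i hij, sub_self]

end SketchAndProject

theorem finite_termination_general (m : ℕ) (A : Matrix (Fin m) (Fin m) ℝ)
    (b : Fin m → ℝ) (x p : ℕ → Fin m → ℝ) (r : ℕ → Fin m → ℝ)
    (hr : ∀ j, r j = b - A.mulVec (x j))
    (hx : ∀ j, 1 ≤ j → x j = x (j - 1) + p j)
    -- sketched constraint S_jᵀ A p_j = S_jᵀ r_{j-1}, columnwise with S_j = [r_0,…,r_{j-1}]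
    (hcons : ∀ j, 1 ≤ j → ∀ i < j, r i ⬝ᵥ A.mulVec (p j) = r i ⬝ᵥ r (j - 1)) :
    (∀ i j, i < j → r i ⬝ᵥ r j = 0) ∧ ∃ k ≤ m, r k = 0 := by
  have horth : ∀ i j, i < j → r i ⬝ᵥ r j = 0 := fun _ _ =>
    residual_dotProduct_eq_zero hr hx hcons
  refine ⟨horth, ?_⟩
  simpa using exists_eq_zero_of_dotProduct_eq_zero_of_lt r horth

/-- Finite termination of residual-sketch PLSS: residuals are pairwise orthogonal
and some residual `r_k` with `k ≤ m` is zero. -/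
theorem finite_termination (m : ℕ) (A : Matrix (Fin m) (Fin m) ℝ)
    (hA : A.IsSymm) (hAinv : IsUnit A.det)
    (b : Fin m → ℝ) (x p : ℕ → Fin m → ℝ) (r : ℕ → Fin m → ℝ)
    (hr : ∀ j, r j = b - A.mulVec (x j))
    (hx : ∀ j, 1 ≤ j → x j = x (j - 1) + p j)
    -- sketched constraint S_jᵀ A p_j = S_jᵀ r_{j-1}, columnwise with S_j = [r_0,…,r_{j-1}]
    (hcons : ∀ j, 1 ≤ j → ∀ i < j, r i ⬝ᵥ A.mulVec (p j) = r i ⬝ᵥ r (j - 1)) :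
    (∀ i j, i < j → r i ⬝ᵥ r j = 0) ∧ ∃ k ≤ m, r k = 0 :=
  finite_termination_general m A b x p r hr hx hcons
end

section
/- Let B ∈ ℝⁿˣⁿ be symmetric positive definite, A ∈ ℝ^{m×n}, S ∈ ℝ^{m×k} with Aᵀ S of full column rank k, and r ∈ ℝ^m. Then among all p satisfying Sᵀ A p = Sᵀ r, the vector p* = B⁻¹ Aᵀ S (Sᵀ A B⁻¹ Aᵀ S)⁻¹ Sᵀ r achieves the strictly smallest B-norm ‖p‖_B = (pᵀ B p)^{1/2}: for any other feasible p ≠ p*, ‖p*‖_B < ‖p‖_B. -/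
open Matrix

/-! With `N = Aᵀ S`, full column rank makes the Gram matrix `Nᵀ B⁻¹ N` positive definite, hence
invertible, and `p* = B⁻¹ N w` with `w = (Nᵀ B⁻¹ N)⁻¹ Sᵀ r` is feasible. Every feasible `p` differs
from `p*` by some `d ∈ ker Nᵀ`, and `dᵀ B p* = dᵀ N w = (Nᵀ d)ᵀ w = 0`, so
`‖p‖²_B = ‖p*‖²_B + ‖d‖²_B` with `‖d‖_B > 0` unless `p = p*`. -/

namespace Matrix

theorem mulVec_injective_of_rank_eq_card_width {m n K : Type*} [Fintype n] [Field K]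
    {A : Matrix m n K} (hA : A.rank = Fintype.card n) : Function.Injective A.mulVec := by
  have h := A.mulVecLin.finrank_range_add_finrank_ker
  rw [← Matrix.rank, hA, Module.finrank_fintype_fun_eq_card, add_eq_left] at h
  exact LinearMap.ker_eq_bot.mp (Submodule.finrank_eq_zero.mp h)

variable {n k : Type*} [Fintype n] {B : Matrix n n ℝ}

theorem PosDef.dotProduct_mulVec_lt_of_orthogonal (hB : B.PosDef) {p q : n → ℝ}
    (horth : (p - q) ⬝ᵥ B *ᵥ q = 0) (hne : p ≠ q) : q ⬝ᵥ B *ᵥ q < p ⬝ᵥ B *ᵥ p := by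
  set d := p - q
  have hsymm : q ⬝ᵥ B *ᵥ d = d ⬝ᵥ B *ᵥ q := by
    rw [dotProduct_mulVec, ← mulVec_transpose, ← conjTranspose_eq_transpose_of_trivial,
      hB.isHermitian.eq, dotProduct_comm]
  have hd : 0 < d ⬝ᵥ B *ᵥ d := by
    simpa only [star_trivial] using hB.dotProduct_mulVec_pos (sub_ne_zero.mpr hne)
  calc q ⬝ᵥ B *ᵥ q < q ⬝ᵥ B *ᵥ q + d ⬝ᵥ B *ᵥ d := lt_add_of_pos_right _ hd
    _ = (q + d) ⬝ᵥ B *ᵥ (q + d) := by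
      rw [mulVec_add, add_dotProduct, dotProduct_add, dotProduct_add, hsymm, horth]; ring
    _ = p ⬝ᵥ B *ᵥ p := by rw [add_sub_cancel]

variable [DecidableEq n] [Fintype k] [DecidableEq k]

/-- The minimiser of `x ⬝ᵥ B *ᵥ x` subject to `Nᵀ *ᵥ x = b`. -/
noncomputable def minNormSolution (B : Matrix n n ℝ) (N : Matrix n k ℝ) (b : k → ℝ) : n → ℝ :=
  (B⁻¹ * N * (Nᵀ * B⁻¹ * N)⁻¹) *ᵥ b

theorem PosDef.transpose_mulVec_minNormSolution (hB : B.PosDef) {N : Matrix n k ℝ}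
    (hN : Function.Injective N.mulVec) (b : k → ℝ) :
    Nᵀ *ᵥ minNormSolution B N b = b := by
  have hgram : (Nᵀ * B⁻¹ * N).PosDef := by
    simpa only [conjTranspose_eq_transpose_of_trivial] using
      hB.inv.conjTranspose_mul_mul_same hN
  rw [minNormSolution, mulVec_mulVec, ← Matrix.mul_assoc, ← Matrix.mul_assoc,
    mul_nonsing_inv _ hgram.det_pos.ne'.isUnit, one_mulVec]

theorem PosDef.minNormSolution_lt (hB : B.PosDef) {N : Matrix n k ℝ}
    (hN : Function.Injective N.mulVec) {b : k → ℝ} {p : n → ℝ} (hp : Nᵀ *ᵥ p = b)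
    (hne : p ≠ minNormSolution B N b) :
    minNormSolution B N b ⬝ᵥ B *ᵥ minNormSolution B N b < p ⬝ᵥ B *ᵥ p := by
  have hBx : B *ᵥ minNormSolution B N b = N *ᵥ ((Nᵀ * B⁻¹ * N)⁻¹ *ᵥ b) := by
    rw [minNormSolution, mulVec_mulVec, ← Matrix.mul_assoc, ← Matrix.mul_assoc, mul_nonsing_inv _
      hB.det_pos.ne'.isUnit, Matrix.one_mul, ← mulVec_mulVec]
  have hker : Nᵀ *ᵥ (p - minNormSolution B N b) = 0 := by
    rw [mulVec_sub, hp, hB.transpose_mulVec_minNormSolution hN, sub_self]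
  refine hB.dotProduct_mulVec_lt_of_orthogonal ?_ hne
  rw [hBx, dotProduct_mulVec, ← mulVec_transpose, hker, zero_dotProduct]

end Matrix

/-- Minimum-B-norm characterization: among all `p` with `SᵀAp = Sᵀr`, the update
`p*` has strictly smallest `B`-norm. -/
theorem min_B_norm (m n k : ℕ) (B : Matrix (Fin n) (Fin n) ℝ) (hB : B.PosDef)
    (A : Matrix (Fin m) (Fin n) ℝ)
    (S : Matrix (Fin m) (Fin k) ℝ) (hrank : (Aᵀ * S).rank = k)
    (r : Fin m → ℝ) (pstar : Fin n → ℝ)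
    (hpstar : pstar = (B⁻¹ * Aᵀ * S * (Sᵀ * A * B⁻¹ * Aᵀ * S)⁻¹ * Sᵀ).mulVec r) :
    (Sᵀ * A).mulVec pstar = Sᵀ.mulVec r ∧
    ∀ p : Fin n → ℝ, (Sᵀ * A).mulVec p = Sᵀ.mulVec r → p ≠ pstar →
      Real.sqrt (pstar ⬝ᵥ B.mulVec pstar) < Real.sqrt (p ⬝ᵥ B.mulVec p) := by
  have hN : Function.Injective (Aᵀ * S).mulVec :=
    mulVec_injective_of_rank_eq_card_width (by rw [hrank, Fintype.card_fin])
  have hSA : Sᵀ * A = (Aᵀ * S)ᵀ := by rw [transpose_mul, transpose_transpose]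
  have hpstar' : pstar = minNormSolution B (Aᵀ * S) (Sᵀ *ᵥ r) := by
    rw [hpstar, minNormSolution, mulVec_mulVec, ← hSA]
    simp only [Matrix.mul_assoc]
  rw [hSA, hpstar']
  refine ⟨hB.transpose_mulVec_minNormSolution hN _, fun p hp hne => ?_⟩
  refine Real.sqrt_lt_sqrt ?_ (hB.minNormSolution_lt hN hp hne)
  simpa only [star_trivial] using hB.posSemidef.dotProduct_mulVec_nonneg _
end
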